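/- arXiv:1404.3875 — 3 statements merged into one kernel-verified Lean document; each statement's English description precedes it below -/
import Mathlib

section
/- The generating function S(z) = (z^3 - z^2 - z + 1 - sqrt(z^6 + 2z^5 - 5z^4 + 4z^3 - z^2 - 2z + 1))/(2z^2(1 - z)) satisfies S(z) = z^2/(1-z) + z^2·S(z) + z^2·S(z)^2 for all real z with 0 < z < ρ, where ρ ≈ 0.509308 is the smallest positive root of z^6 + 2z^5 - 5z^4 + 4z^3 - z^2 - 2z + 1. -/
/-!
On `(0, ρ)` the polynomial `D = lambdaDisc` under the square root stays positive: it is positive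
at `0` and, by the intermediate value theorem, could only change sign at a root smaller than `ρ`.
Then `S` is the root `(-b - √(b² - 4ac)) / 2a` of `a S² + b S + c` with `a = z²`, `b = z² - 1`,
`c = z² / (1 - z)`, because `(1 - z)² (b² - 4ac) = D(z)`.
-/

def lambdaDisc (z : ℝ) : ℝ := z^6 + 2*z^5 - 5*z^4 + 4*z^3 - z^2 - 2*z + 1

theorem pos_of_forall_root_ge {f : ℝ → ℝ} (hf : Continuous f) (hf0 : 0 < f 0) {ρ z : ℝ}
    (hρ : ∀ y, 0 < y → f y = 0 → ρ ≤ y) (hz0 : 0 ≤ z) (hzρ : z < ρ) : 0 < f z := by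
  by_contra! hfz
  obtain ⟨c, ⟨hc0, hcz⟩, hfc⟩ :=
    intermediate_value_Ioc' hz0 hf.continuousOn ⟨hfz, hf0⟩
  linarith [hρ c hc0 hfc]

theorem discrim_lambda_eq (z : ℝ) (hz : z ≠ 1) :
    discrim (z^2) (z^2 - 1) (z^2 / (1 - z)) = lambdaDisc z / (1 - z)^2 := by
  have : (1 : ℝ) - z ≠ 0 := sub_ne_zero.mpr hz.symm
  unfold discrim lambdaDisc
  field_simp
  ring

theorem lambda_gf_equation_general (ρ : ℝ)
    (hρmin : ∀ y : ℝ, 0 < y → y^6 + 2*y^5 - 5*y^4 + 4*y^3 - y^2 - 2*y + 1 = 0 → ρ ≤ y)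
    (z : ℝ) (h0 : 0 < z) (h1 : z < ρ) :
    let S : ℝ := (z^3 - z^2 - z + 1 -
        Real.sqrt (z^6 + 2*z^5 - 5*z^4 + 4*z^3 - z^2 - 2*z + 1)) / (2*z^2*(1 - z))
    S = z^2/(1-z) + z^2 * S + z^2 * S^2 := by
  intro S
  -- `1` is a root of `D`, so `ρ ≤ 1`.
  have hz1 : z < 1 := h1.trans_le (hρmin 1 one_pos (by norm_num))
  have hz1' : (1 : ℝ) - z ≠ 0 := by linarith
  have hD : 0 ≤ lambdaDisc z :=
    (pos_of_forall_root_ge (by fun_prop) (by norm_num) hρmin h0.le h1).le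
  set s := Real.sqrt (lambdaDisc z) / (1 - z)
  have hs : discrim (z^2) (z^2 - 1) (z^2 / (1 - z)) = s * s := by
    rw [discrim_lambda_eq z hz1.ne, div_mul_div_comm, Real.mul_self_sqrt hD, sq]
  have hS : S = (-(z^2 - 1) - s) / (2 * z^2) := by
    simp only [S, s, lambdaDisc]
    field_simp
    ring
  have hroot := (quadratic_eq_zero_iff (pow_ne_zero 2 h0.ne') hs S).mpr (Or.inr hS)
  linear_combination -hroot

theorem lambda_gf_equation (ρ : ℝ)
    (hρ0 : 0 < ρ)
    (hρroot : ρ^6 + 2*ρ^5 - 5*ρ^4 + 4*ρ^3 - ρ^2 - 2*ρ + 1 = 0)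
    (hρmin : ∀ y : ℝ, 0 < y → y^6 + 2*y^5 - 5*y^4 + 4*y^3 - y^2 - 2*y + 1 = 0 → ρ ≤ y)
    (z : ℝ) (h0 : 0 < z) (h1 : z < ρ) :
    let S : ℝ := (z^3 - z^2 - z + 1 -
        Real.sqrt (z^6 + 2*z^5 - 5*z^4 + 4*z^3 - z^2 - 2*z + 1)) / (2*z^2*(1 - z))
    S = z^2/(1-z) + z^2 * S + z^2 * S^2 :=
  lambda_gf_equation_general ρ hρmin z h0 h1
end

section
/- If ρ ∈ (0,1) satisfies ρ^5 + 3ρ^4 - 2ρ^3 + 2ρ^2 + ρ - 1 = 0, then 2ρ^4/((1-ρ)(1-ρ^2)) = (1-ρ^2)/2. -/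
theorem variable_app_probs_equal_general (ρ : ℝ)
    (hroot : ρ^5 + 3*ρ^4 - 2*ρ^3 + 2*ρ^2 + ρ - 1 = 0) :
    2*ρ^4 / ((1 - ρ) * (1 - ρ^2)) = (1 - ρ^2) / 2 := by
  -- The quintic leaves remainder 4 on division by ρ² - 1, so it has no root at ρ = ±1.
  have hsq : ρ ^ 2 ≠ 1 := fun h => by
    have : (4 : ℝ) = 0 := by linear_combination hroot - (ρ^3 + 3*ρ^2 - ρ + 5) * h
    norm_num at this
  have hden : (1 - ρ) * (1 - ρ ^ 2) ≠ 0 := by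
    refine mul_ne_zero (fun h => hsq ?_) (sub_ne_zero.2 hsq.symm)
    rw [show ρ = 1 by linarith, one_pow]
  rw [div_eq_div_iff hden two_ne_zero]
  -- Cleared of denominators, the identity is the defining quintic itself.
  linear_combination hroot

theorem variable_app_probs_equal (ρ : ℝ) (h0 : 0 < ρ) (h1 : ρ < 1)
    (hroot : ρ^5 + 3*ρ^4 - 2*ρ^3 + 2*ρ^2 + ρ - 1 = 0) :
    2*ρ^4 / ((1 - ρ) * (1 - ρ^2)) = (1 - ρ^2) / 2 :=
  variable_app_probs_equal_general ρ hroot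
end

section
/- Let S(m, n) be defined by S(m,0) = S(m,1) = 0 and S(m, n+2) = (if m ≥ n+1 then 1 else 0) + S(m+1, n) + sum_{k=0}^{n} S(m,k)·S(m,n-k). Then for all m and n, S(m, n) ≤ S(m+1, n), and S(m, n) = S(n, n) for all m ≥ n; in particular the pointwise limit S(∞, n) = lim_{m→∞} S(m, n) exists and equals S(n, n), satisfying S(∞,0) = S(∞,1) = 0 and S(∞, n+2) = 1 + S(∞, n) + sum_{k=0}^n S(∞,k)·S(∞,n-k). -/
/-!
Every term of the recursion for `S m (n+2)` is monotone in `m`, so strong induction on `n` gives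
monotonicity. Once `m ≥ n + 1` the bracket is `1` and every other term is a value of `S` at a
smaller size `k` and a number of free indices `≥ k`; by strong induction those values have already
stabilised to `S k k`, so `S m n` no longer depends on `m`.
-/

open Finset Filter

structure LambdaCountRec (S : ℕ → ℕ → ℕ) : Prop where
  zero : ∀ m, S m 0 = 0
  one : ∀ m, S m 1 = 0
  succ_succ : ∀ m n, S m (n+2) =
    (if n + 1 ≤ m then 1 else 0) + S (m+1) n + ∑ k ∈ range (n+1), S m k * S m (n-k)

namespace LambdaCountRec

variable {S : ℕ → ℕ → ℕ}

theorem succ_succ_of_stable (hS : LambdaCountRec S) {m n : ℕ}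
    (hstab : ∀ k ≤ n, ∀ m', k ≤ m' → S m' k = S k k) (hm : n + 1 ≤ m) :
    S m (n+2) = 1 + S n n + ∑ k ∈ range (n+1), S k k * S (n-k) (n-k) := by
  rw [hS.succ_succ, if_pos hm, hstab n le_rfl _ (by omega)]
  congr 1
  refine sum_congr rfl fun k hk => ?_
  rw [mem_range] at hk
  rw [hstab k (by omega) m (by omega), hstab (n-k) (by omega) m (by omega)]

theorem eq_diag (hS : LambdaCountRec S) {m n : ℕ} (hnm : n ≤ m) : S m n = S n n := by
  induction n using Nat.strong_induction_on generalizing m with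
  | _ n ih =>
    match n with
    | 0 => rw [hS.zero, hS.zero]
    | 1 => rw [hS.one, hS.one]
    | n + 2 =>
      have hstab : ∀ k ≤ n, ∀ m', k ≤ m' → S m' k = S k k :=
        fun k hk _ hm' => ih k (by omega) hm'
      rw [hS.succ_succ_of_stable hstab (by omega), hS.succ_succ_of_stable hstab (by omega)]

theorem mono (hS : LambdaCountRec S) (m n : ℕ) : S m n ≤ S (m+1) n := by
  induction n using Nat.strong_induction_on generalizing m with
  | _ n ih =>
    match n with
    | 0 => rw [hS.zero, hS.zero]
    | 1 => rw [hS.one, hS.one]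
    | n + 2 =>
      rw [hS.succ_succ, hS.succ_succ]
      refine add_le_add (add_le_add ?_ (ih n (by omega) (m+1))) (sum_le_sum fun k hk => ?_)
      · split_ifs <;> omega
      · rw [mem_range] at hk
        exact Nat.mul_le_mul (ih k (by omega) m) (ih (n-k) (by omega) m)

theorem tendsto_diag (hS : LambdaCountRec S) (n : ℕ) :
    Tendsto (fun m => S m n) atTop (nhds (S n n)) :=
  tendsto_atTop_of_eventually_const fun _ hm => hS.eq_diag hm

theorem diag_succ_succ (hS : LambdaCountRec S) (n : ℕ) :
    S (n+2) (n+2) = 1 + S n n + ∑ k ∈ range (n+1), S k k * S (n-k) (n-k) :=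
  hS.succ_succ_of_stable (fun _ _ _ hm => hS.eq_diag hm) (by omega)

end LambdaCountRec

theorem lambda_bounded_free_indices (S : ℕ → ℕ → ℕ)
    (h0 : ∀ m, S m 0 = 0) (h1 : ∀ m, S m 1 = 0)
    (hrec : ∀ m n, S m (n+2) =
        (if n + 1 ≤ m then 1 else 0) + S (m+1) n +
          ∑ k ∈ Finset.range (n+1), S m k * S m (n-k)) :
    (∀ m n, S m n ≤ S (m+1) n) ∧
    (∀ m n, n ≤ m → S m n = S n n) ∧
    (∀ n, Filter.Tendsto (fun m => S m n) Filter.atTop (nhds (S n n))) ∧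
    (S 0 0 = 0 ∧ S 1 1 = 0 ∧
      ∀ n, S (n+2) (n+2) =
        1 + S n n + ∑ k ∈ Finset.range (n+1), S k k * S (n-k) (n-k)) := by
  have hS : LambdaCountRec S := ⟨h0, h1, hrec⟩
  exact ⟨hS.mono, fun _ _ => hS.eq_diag, hS.tendsto_diag, h0 0, h1 1, hS.diag_succ_succ⟩
end
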